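/- Let x₀, ẋ₀, y₀, ẏ₀ ∈ ℝ, let X(u) = x₀ + ẋ₀(2 + u₋) − ẋ₀/(1 + u₊) and Y(u) = y₀ + ẏ₀ u₋ + ẏ₀/(1 − u₊) for u < 1, and write x̂ := x₀ + ẋ₀, ŷ := y₀ + ẏ₀. Then the discontinuous transformation x = (1 + u₊)X, y = (1 − u₊)Y maps these geodesics of the continuous metric exactly onto the distributional geodesics of the impulsive plane wave with profile f(x,y) = x² − y²: for every u ∈ (−∞, 1), (1 + u₊) X(u) = x₀ + ẋ₀(1 + u) + x̂ u₊ and (1 − u₊) Y(u) = y₀ + ẏ₀(1 + u) − ŷ u₊ (note ½∂_x f(x̂, ŷ) = x̂ and ½∂_y f(x̂, ŷ) = −ŷ). -/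

import Mathlib

open Set

/-- The kink function `u₊ = u θ(u)`. -/
noncomputable def uplus (u : ℝ) : ℝ := max u 0

/-- The function `u₋ = u θ(-u)`. -/
noncomputable def uminus (u : ℝ) : ℝ := min u 0

/-- The `X`-geodesic of the impulsive plane wave in continuous (Rosen-type) coordinates,
with `X(-1) = x₀`, `X'(-1) = ẋ₀`. -/
noncomputable def Xgeo (x₀ xdot0 : ℝ) (u : ℝ) : ℝ :=
  x₀ + xdot0 * (2 + uminus u) - xdot0 / (1 + uplus u)

/-- The `Y`-geodesic of the impulsive plane wave in continuous (Rosen-type) coordinates,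
with `Y(-1) = y₀`, `Y'(-1) = ẏ₀`. -/
noncomputable def Ygeo (y₀ ydot0 : ℝ) (u : ℝ) : ℝ :=
  y₀ + ydot0 * uminus u + ydot0 / (1 - uplus u)

/-- The `V`-geodesic of the impulsive plane wave in continuous (Rosen-type) coordinates,
with `V(-1) = v₀`, `V'(-1) = v̇₀`. -/
noncomputable def Vgeo (v₀ vdot0 xdot0 ydot0 : ℝ) (u : ℝ) : ℝ :=
  v₀ + vdot0 * (1 + u) + ydot0 ^ 2 * (uplus u) ^ 2 / (1 - u)
    - xdot0 ^ 2 * (uplus u) ^ 2 / (1 + u)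

variable {u : ℝ}

theorem uplus_of_nonpos (h : u ≤ 0) : uplus u = 0 := max_eq_right h

theorem uplus_of_nonneg (h : 0 ≤ u) : uplus u = u := max_eq_left h

theorem uminus_of_nonpos (h : u ≤ 0) : uminus u = u := min_eq_left h

theorem uminus_of_nonneg (h : 0 ≤ u) : uminus u = 0 := min_eq_right h

theorem Xgeo_of_nonpos (x₀ xdot0 : ℝ) (h : u ≤ 0) : Xgeo x₀ xdot0 u = x₀ + xdot0 * (1 + u) := by
  rw [Xgeo, uminus_of_nonpos h, uplus_of_nonpos h]
  ring

theorem Ygeo_of_nonpos (y₀ ydot0 : ℝ) (h : u ≤ 0) : Ygeo y₀ ydot0 u = y₀ + ydot0 * (1 + u) := by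
  rw [Ygeo, uminus_of_nonpos h, uplus_of_nonpos h]
  ring

theorem Xgeo_of_nonneg (x₀ xdot0 : ℝ) (h : 0 ≤ u) :
    Xgeo x₀ xdot0 u = x₀ + 2 * xdot0 - xdot0 / (1 + u) := by
  rw [Xgeo, uminus_of_nonneg h, uplus_of_nonneg h]
  ring

theorem Ygeo_of_nonneg (y₀ ydot0 : ℝ) (h : 0 ≤ u) : Ygeo y₀ ydot0 u = y₀ + ydot0 / (1 - u) := by
  rw [Ygeo, uminus_of_nonneg h, uplus_of_nonneg h]
  ring

/-- The discontinuous transformation `x = (1+u₊)X`, `y = (1-u₊)Y` maps the geodesics of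
the continuous metric exactly onto the distributional (broken straight line) geodesics of
the impulsive plane wave with profile `f(x,y) = x² - y²`, where `x̂ = x₀ + ẋ₀`,
`ŷ = y₀ + ẏ₀`. -/
theorem transformation_maps_transverse_geodesics (x₀ xdot0 y₀ ydot0 : ℝ) :
    ∀ u < (1:ℝ),
      (1 + uplus u) * Xgeo x₀ xdot0 u
        = x₀ + xdot0 * (1 + u) + (x₀ + xdot0) * uplus u ∧
      (1 - uplus u) * Ygeo y₀ ydot0 u
        = y₀ + ydot0 * (1 + u) - (y₀ + ydot0) * uplus u := by
  intro u hu
  rcases le_total u 0 with h | h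
  · rw [uplus_of_nonpos h, Xgeo_of_nonpos x₀ xdot0 h, Ygeo_of_nonpos y₀ ydot0 h]
    constructor <;> ring
  · rw [uplus_of_nonneg h, Xgeo_of_nonneg x₀ xdot0 h, Ygeo_of_nonneg y₀ ydot0 h]
    have h1 : 1 + u ≠ 0 := by linarith
    have h2 : 1 - u ≠ 0 := by linarith
    constructor <;> field_simp <;> ring
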